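/- Let ξ₁, ξ₂, ξ₃ be real numbers with ξ₁ + ξ₂ + ξ₃ = 0. If N_max := max(|ξ₁|,|ξ₂|,|ξ₃|), N_min := min(|ξ₁|,|ξ₂|,|ξ₃|), and N_med is the middle value, and N_max ≥ 1 with N_max ≤ 2·N_med, then |ξ₁⁵ + ξ₂⁵ + ξ₃⁵| is comparable to N_max⁴·N_min, i.e., there exist absolute constants c, C > 0 such that c·N_max⁴·N_min ≤ |ξ₁⁵ + ξ₂⁵ + ξ₃⁵| ≤ C·N_max⁴·N_min. -/

import Mathlib

/-! When `ξ₁ + ξ₂ + ξ₃ = 0`, Newton's identities give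
`ξ₁⁵ + ξ₂⁵ + ξ₃⁵ = (5/2) ξ₁ξ₂ξ₃ (ξ₁² + ξ₂² + ξ₃²)`. The product of the three magnitudes is
`N_max N_med N_min`, and `ξ₁² + ξ₂² + ξ₃²` lies between `N_max²` and `3 N_max²`; since
`N_max / 2 ≤ N_med ≤ N_max`, the quantity is comparable to `N_max⁴ N_min`, with constants `5/4`
and `15/2`. -/

theorem add_pow_five_of_add_eq_zero {R : Type*} [CommRing R] {a b c : R} (h : a + b + c = 0) :
    2 * (a ^ 5 + b ^ 5 + c ^ 5) = 5 * (a * b * c) * (a ^ 2 + b ^ 2 + c ^ 2) := by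
  rw [eq_neg_of_add_eq_zero_right h]
  ring

theorem abs_add_pow_five_of_add_eq_zero {a b c : ℝ} (h : a + b + c = 0) :
    |a ^ 5 + b ^ 5 + c ^ 5| = 5 / 2 * (|a| * |b| * |c|) * (a ^ 2 + b ^ 2 + c ^ 2) := by
  have h₅ : a ^ 5 + b ^ 5 + c ^ 5 = 5 / 2 * (a * b * c) * (a ^ 2 + b ^ 2 + c ^ 2) := by
    linear_combination (1 / 2 : ℝ) * add_pow_five_of_add_eq_zero h
  have hQ : 0 ≤ a ^ 2 + b ^ 2 + c ^ 2 := by positivity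
  rw [h₅, abs_mul, abs_of_nonneg hQ, abs_mul, abs_mul, abs_mul]
  norm_num

section MaxMedMin

variable {α : Type*} [CommRing α] [LinearOrder α] [IsStrictOrderedRing α]

/-- `a + b + c - max - min` is the median of three elements. -/
theorem max_mul_med_mul_min (a b c : α) :
    max a (max b c) * (a + b + c - max a (max b c) - min a (min b c)) * min a (min b c) =
      a * b * c := by
  simp only [max_def, min_def]
  split_ifs <;> first | ring1 | (exfalso; linarith)

theorem med_le_max (a b c : α) :
    a + b + c - max a (max b c) - min a (min b c) ≤ max a (max b c) := by
  simp only [max_def, min_def]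
  split_ifs <;> linarith

theorem sq_max_le_add_sq (a b c : α) : max a (max b c) ^ 2 ≤ a ^ 2 + b ^ 2 + c ^ 2 := by
  rcases max_choice a (max b c) with h | h <;> rw [h]
  · linarith [sq_nonneg b, sq_nonneg c]
  · rcases max_choice b c with h' | h' <;> rw [h'] <;>
      linarith [sq_nonneg a, sq_nonneg b, sq_nonneg c]

theorem add_sq_le_three_mul_sq_max {a b c : α} (ha : 0 ≤ a) (hb : 0 ≤ b) (hc : 0 ≤ c) :
    a ^ 2 + b ^ 2 + c ^ 2 ≤ 3 * max a (max b c) ^ 2 := by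
  have h₁ : a ^ 2 ≤ max a (max b c) ^ 2 := pow_le_pow_left₀ ha (le_max_left _ _) 2
  have h₂ : b ^ 2 ≤ max a (max b c) ^ 2 :=
    pow_le_pow_left₀ hb ((le_max_left _ _).trans (le_max_right _ _)) 2
  have h₃ : c ^ 2 ≤ max a (max b c) ^ 2 :=
    pow_le_pow_left₀ hc ((le_max_right _ _).trans (le_max_right _ _)) 2
  linarith

end MaxMedMin

theorem resonance_relation :
    ∃ c C : ℝ, 0 < c ∧ 0 < C ∧
      ∀ ξ₁ ξ₂ ξ₃ : ℝ, ξ₁ + ξ₂ + ξ₃ = 0 →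
        ∀ Nmax Nmin Nmed : ℝ,
          Nmax = max |ξ₁| (max |ξ₂| |ξ₃|) →
          Nmin = min |ξ₁| (min |ξ₂| |ξ₃|) →
          Nmed = |ξ₁| + |ξ₂| + |ξ₃| - Nmax - Nmin →
          1 ≤ Nmax → Nmax ≤ 2 * Nmed →
          c * Nmax ^ 4 * Nmin ≤ |ξ₁ ^ 5 + ξ₂ ^ 5 + ξ₃ ^ 5| ∧
            |ξ₁ ^ 5 + ξ₂ ^ 5 + ξ₃ ^ 5| ≤ C * Nmax ^ 4 * Nmin := by
  refine ⟨5 / 4, 15 / 2, by norm_num, by norm_num, ?_⟩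
  intro ξ₁ ξ₂ ξ₃ hsum Nmax Nmin Nmed hmax hmin hmed h1 h2
  have hQ_lower : Nmax ^ 2 ≤ ξ₁ ^ 2 + ξ₂ ^ 2 + ξ₃ ^ 2 := by
    simpa only [hmax, sq_abs] using sq_max_le_add_sq |ξ₁| |ξ₂| |ξ₃|
  have hQ_upper : ξ₁ ^ 2 + ξ₂ ^ 2 + ξ₃ ^ 2 ≤ 3 * Nmax ^ 2 := by
    simpa only [hmax, sq_abs] using
      add_sq_le_three_mul_sq_max (abs_nonneg ξ₁) (abs_nonneg ξ₂) (abs_nonneg ξ₃)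
  have hmed_le : Nmed ≤ Nmax := by rw [hmed, hmax, hmin]; exact med_le_max _ _ _
  have hmin_nonneg : 0 ≤ Nmin := by rw [hmin]; positivity
  have habs : |ξ₁ ^ 5 + ξ₂ ^ 5 + ξ₃ ^ 5| =
      5 / 2 * (Nmax * Nmed * Nmin) * (ξ₁ ^ 2 + ξ₂ ^ 2 + ξ₃ ^ 2) := by
    rw [abs_add_pow_five_of_add_eq_zero hsum, hmed, hmax, hmin, max_mul_med_mul_min]
  have hmed_nonneg : 0 ≤ Nmed := by linarith
  rw [habs]
  constructor
  · calc 5 / 4 * Nmax ^ 4 * Nmin = 5 / 2 * (Nmax * (Nmax / 2) * Nmin) * Nmax ^ 2 := by ring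
      _ ≤ 5 / 2 * (Nmax * Nmed * Nmin) * (ξ₁ ^ 2 + ξ₂ ^ 2 + ξ₃ ^ 2) := by
        gcongr
        linarith
  · calc 5 / 2 * (Nmax * Nmed * Nmin) * (ξ₁ ^ 2 + ξ₂ ^ 2 + ξ₃ ^ 2)
        ≤ 5 / 2 * (Nmax * Nmax * Nmin) * (3 * Nmax ^ 2) := by
          gcongr
      _ = 15 / 2 * Nmax ^ 4 * Nmin := by ring
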